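/- Let a_1,…,a_m be nonzero vectors in ℂ^d. For i = 1,…,c let w_i > 0 with Σ_{i=1}^{c} w_i = 1; let R_i be a finite composition of relaxed projections P_{a_v}^{ω_v} with indices v drawn from a list L_i ⊆ {1,…,m} and relaxation parameters ω_v ∈ (0,2); let G_i ⊆ {1,…,m}, α_i < 1, and let C_i be a linear operator on ℂ^d such that C_i x = x whenever ⟨x, a_u⟩ = 0 for all u ∈ G_i, C_i maps H_i := span{a_u : u ∈ G_i} into itself, and ‖C_i x‖ ≤ α_i ‖x‖ for every x ∈ H_i. Assume every index j ∈ {1,…,m} occurs in some list L_i or belongs to some set G_i, and set T = Σ_{i=1}^{c} w_i (C_i ∘ R_i). If x ∈ ℂ^d satisfies ‖T x‖ = ‖x‖, then ⟨x, a_j⟩ = 0 for every j = 1,…,m. -/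

import Mathlib

/-!
Every factor of `T` is nonexpansive, and is an isometry at a point only if it fixes that point:
for `P_a^ω` this is the identity `‖P_a^ω x‖² = ‖x‖² - ω (2 - ω) |⟨x, a⟩|² / ‖a‖²` with
`ω (2 - ω) > 0`, and for `C_i` it follows from splitting `x` along `H_i ⊕ H_iᗮ`, where `C_i` is
a strict contraction on the first summand and the identity on the second. As `T x` is a convex
combination of the vectors `C_i (R_i x)`, all of norm at most `‖x‖`, the equality `‖T x‖ = ‖x‖`
forces `‖C_i (R_i x)‖ = ‖x‖` for every `i`. Hence every relaxed projection in `R_i` fixes `x`,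
i.e. `⟨x, a_v⟩ = 0` for `v ∈ L_i`, so `R_i x = x`, and then `‖C_i x‖ = ‖x‖` gives `x ∈ H_iᗮ`.
-/

/-- The relaxed projection `P_a^ω x = x - ω (⟨x,a⟩/‖a‖²) a` associated to a vector `a ∈ ℂ^d`
and a real relaxation parameter `ω`. -/
noncomputable def relaxProj {d : ℕ} (a : EuclideanSpace ℂ (Fin d)) (ω : ℝ)
    (x : EuclideanSpace ℂ (Fin d)) : EuclideanSpace ℂ (Fin d) :=
  x - ((ω : ℂ) * ((inner ℂ a x : ℂ) / (‖a‖ : ℂ) ^ 2)) • a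

open scoped ComplexConjugate

section RelaxedProjection

variable {d : ℕ} (a x : EuclideanSpace ℂ (Fin d))

theorem norm_relaxProj_sq (ω : ℝ) :
    ‖relaxProj a ω x‖ ^ 2 = ‖x‖ ^ 2 - ω * (2 - ω) * (‖inner ℂ a x‖ ^ 2 / ‖a‖ ^ 2) := by
  rcases eq_or_ne a 0 with rfl | ha
  · simp [relaxProj]
  have hsq : inner ℂ a x * conj (inner ℂ a x) = ((‖inner ℂ a x‖ ^ 2 : ℝ) : ℂ) := by
    rw [RCLike.mul_conj]; push_cast; rfl
  have hre : RCLike.re (inner ℂ x ((ω * (inner ℂ a x / (‖a‖ : ℂ) ^ 2)) • a))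
      = ω * ‖inner ℂ a x‖ ^ 2 / ‖a‖ ^ 2 := by
    rw [inner_smul_right, ← inner_conj_symm x a,
      show (ω : ℂ) * (inner ℂ a x / (‖a‖ : ℂ) ^ 2) * conj (inner ℂ a x)
        = ω * (inner ℂ a x * conj (inner ℂ a x)) / (‖a‖ : ℂ) ^ 2 by ring, hsq]
    norm_cast
  rw [relaxProj, norm_sub_sq (𝕜 := ℂ), hre, norm_smul, norm_mul, norm_div, norm_pow]
  simp only [Complex.norm_real, Real.norm_eq_abs, abs_norm]
  field_simp
  rw [sq_abs]
  ring

theorem norm_relaxProj_le {ω : ℝ} (hω : ω ∈ Set.Icc 0 2) : ‖relaxProj a ω x‖ ≤ ‖x‖ := by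
  have hdefect : 0 ≤ ω * (2 - ω) * (‖inner ℂ a x‖ ^ 2 / ‖a‖ ^ 2) :=
    mul_nonneg (mul_nonneg hω.1 (sub_nonneg.2 hω.2)) (by positivity)
  rw [← sq_le_sq₀ (norm_nonneg _) (norm_nonneg _), norm_relaxProj_sq]
  linarith

theorem norm_relaxProj_eq_iff {ω : ℝ} (ha : a ≠ 0) (hω : ω ∈ Set.Ioo 0 2) :
    ‖relaxProj a ω x‖ = ‖x‖ ↔ inner ℂ a x = 0 := by
  rw [← sq_eq_sq₀ (norm_nonneg _) (norm_nonneg _), norm_relaxProj_sq, sub_eq_self]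
  simp [hω.1.ne', (sub_pos.2 hω.2).ne', ha]

theorem relaxProj_eq_self_iff {ω : ℝ} (ha : a ≠ 0) (hω : ω ≠ 0) :
    relaxProj a ω x = x ↔ inner ℂ a x = 0 := by
  simp [relaxProj, ha, hω]

end RelaxedProjection

namespace List

variable {ι E : Type*} {f : ι → E → E} {l : List ι}

theorem foldl_eq_self_of_forall_mem {x : E} (h : ∀ v ∈ l, f v x = x) :
    l.foldl (fun y v => f v y) x = x := by
  induction l with
  | nil => rfl
  | cons v l ih =>
    rw [foldl_cons, h v mem_cons_self]
    exact ih fun u hu => h u (mem_cons_of_mem v hu)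

variable [SeminormedAddCommGroup E]

theorem norm_foldl_le (hf : ∀ v ∈ l, ∀ y, ‖f v y‖ ≤ ‖y‖) (x : E) :
    ‖l.foldl (fun y v => f v y) x‖ ≤ ‖x‖ := by
  induction l generalizing x with
  | nil => rfl
  | cons v l ih =>
    exact (ih (fun u hu => hf u (mem_cons_of_mem v hu)) _).trans (hf v mem_cons_self x)

theorem forall_apply_eq_self_of_norm_foldl_eq (hf : ∀ v ∈ l, ∀ y, ‖f v y‖ ≤ ‖y‖)
    (hrigid : ∀ v ∈ l, ∀ y, ‖f v y‖ = ‖y‖ → f v y = y) {x : E}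
    (h : ‖l.foldl (fun y v => f v y) x‖ = ‖x‖) : ∀ v ∈ l, f v x = x := by
  induction l with
  | nil => simp
  | cons v l ih =>
    have hf' : ∀ u ∈ l, ∀ y, ‖f u y‖ ≤ ‖y‖ := fun u hu => hf u (mem_cons_of_mem v hu)
    rw [foldl_cons] at h
    have hv : f v x = x := hrigid v mem_cons_self x <|
      le_antisymm (hf v mem_cons_self x) (h ▸ norm_foldl_le hf' _)
    rw [hv] at h
    exact forall_mem_cons.2 ⟨hv, ih hf' (fun u hu => hrigid u (mem_cons_of_mem v hu)) h⟩

end List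

section RelaxedProjectionSweep

variable {d : ℕ} {ι : Type*} (a : ι → EuclideanSpace ℂ (Fin d)) {ω : ι → ℝ} {l : List ι}

theorem norm_foldl_relaxProj_le (hω : ∀ v ∈ l, ω v ∈ Set.Icc 0 2)
    (x : EuclideanSpace ℂ (Fin d)) : ‖l.foldl (fun y v => relaxProj (a v) (ω v) y) x‖ ≤ ‖x‖ :=
  List.norm_foldl_le (fun v hv y => norm_relaxProj_le (a v) y (hω v hv)) x

theorem foldl_relaxProj_eq_self_of_norm_eq (ha : ∀ v ∈ l, a v ≠ 0)
    (hω : ∀ v ∈ l, ω v ∈ Set.Ioo 0 2) {x : EuclideanSpace ℂ (Fin d)}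
    (h : ‖l.foldl (fun y v => relaxProj (a v) (ω v) y) x‖ = ‖x‖) :
    (∀ v ∈ l, inner ℂ (a v) x = 0) ∧ l.foldl (fun y v => relaxProj (a v) (ω v) y) x = x := by
  have hfix : ∀ v ∈ l, relaxProj (a v) (ω v) x = x :=
    List.forall_apply_eq_self_of_norm_foldl_eq
      (fun v hv y => norm_relaxProj_le (a v) y (Set.Ioo_subset_Icc_self (hω v hv)))
      (fun v hv y hy => (relaxProj_eq_self_iff (a v) y (ha v hv) (hω v hv).1.ne').2
        ((norm_relaxProj_eq_iff (a v) y (ha v hv) (hω v hv)).1 hy)) h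
  exact ⟨fun v hv => (relaxProj_eq_self_iff (a v) x (ha v hv) (hω v hv).1.ne').1 (hfix v hv),
    List.foldl_eq_self_of_forall_mem hfix⟩

end RelaxedProjectionSweep

section Contraction

variable {𝕜 E : Type*} [RCLike 𝕜] [NormedAddCommGroup E] [InnerProductSpace 𝕜 E]
  {K : Submodule 𝕜 E} {C : E →ₗ[𝕜] E}

theorem norm_add_sq_of_mem_orthogonal {p q : E} (hp : p ∈ K) (hq : q ∈ Kᗮ) :
    ‖p + q‖ ^ 2 = ‖p‖ ^ 2 + ‖q‖ ^ 2 := by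
  simpa only [sq] using norm_add_sq_eq_norm_sq_add_norm_sq_of_inner_eq_zero p q
    (K.inner_right_of_mem_orthogonal hp hq)

theorem norm_apply_add_sq_of_mem_orthogonal (hfix : ∀ y ∈ Kᗮ, C y = y) (hinv : ∀ y ∈ K, C y ∈ K)
    {p q : E} (hp : p ∈ K) (hq : q ∈ Kᗮ) : ‖C (p + q)‖ ^ 2 = ‖C p‖ ^ 2 + ‖q‖ ^ 2 := by
  rw [map_add, hfix q hq, norm_add_sq_of_mem_orthogonal (hinv p hp) hq]

variable [K.HasOrthogonalProjection] {α : ℝ}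

theorem norm_apply_le_of_contractive (hfix : ∀ y ∈ Kᗮ, C y = y) (hinv : ∀ y ∈ K, C y ∈ K)
    (hcon : ∀ y ∈ K, ‖C y‖ ≤ α * ‖y‖) (hα : α ≤ 1) (y : E) : ‖C y‖ ≤ ‖y‖ := by
  obtain ⟨p, hp, q, hq, rfl⟩ := K.exists_add_mem_mem_orthogonal y
  have hCp : ‖C p‖ ≤ ‖p‖ := (hcon p hp).trans (mul_le_of_le_one_left (norm_nonneg p) hα)
  rw [← sq_le_sq₀ (norm_nonneg _) (norm_nonneg _),
    norm_apply_add_sq_of_mem_orthogonal hfix hinv hp hq, norm_add_sq_of_mem_orthogonal hp hq]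
  gcongr

theorem mem_orthogonal_of_norm_apply_eq (hfix : ∀ y ∈ Kᗮ, C y = y) (hinv : ∀ y ∈ K, C y ∈ K)
    (hcon : ∀ y ∈ K, ‖C y‖ ≤ α * ‖y‖) (hα : α < 1) {y : E} (h : ‖C y‖ = ‖y‖) : y ∈ Kᗮ := by
  obtain ⟨p, hp, q, hq, rfl⟩ := K.exists_add_mem_mem_orthogonal y
  rw [← sq_eq_sq₀ (norm_nonneg _) (norm_nonneg _),
    norm_apply_add_sq_of_mem_orthogonal hfix hinv hp hq, norm_add_sq_of_mem_orthogonal hp hq,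
    add_left_inj, sq_eq_sq₀ (norm_nonneg _) (norm_nonneg _)] at h
  have hp0 : ‖p‖ = 0 := by nlinarith [hcon p hp, norm_nonneg p]
  rwa [norm_eq_zero.1 hp0, zero_add]

end Contraction

theorem norm_eq_of_le_norm_sum_smul {ι E : Type*} [SeminormedAddCommGroup E] [NormedSpace ℝ E]
    {s : Finset ι} {w : ι → ℝ} {y : ι → E} {r : ℝ} (hw : ∀ i ∈ s, 0 < w i)
    (hw1 : ∑ i ∈ s, w i = 1) (hy : ∀ i ∈ s, ‖y i‖ ≤ r) (h : r ≤ ‖∑ i ∈ s, w i • y i‖) :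
    ∀ i ∈ s, ‖y i‖ = r := by
  have hle : ∀ i ∈ s, w i * ‖y i‖ ≤ w i * r :=
    fun i hi => mul_le_mul_of_nonneg_left (hy i hi) (hw i hi).le
  have hsum : ∑ i ∈ s, w i * ‖y i‖ = ∑ i ∈ s, w i * r := by
    refine le_antisymm (Finset.sum_le_sum hle) ?_
    calc ∑ i ∈ s, w i * r = r := by rw [← Finset.sum_mul, hw1, one_mul]
      _ ≤ ‖∑ i ∈ s, w i • y i‖ := h
      _ ≤ ∑ i ∈ s, ‖w i • y i‖ := norm_sum_le _ _
      _ = ∑ i ∈ s, w i * ‖y i‖ := Finset.sum_congr rfl fun i hi => by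
        rw [norm_smul, Real.norm_of_nonneg (hw i hi).le]
  exact fun i hi => mul_left_cancel₀ (hw i hi).ne' ((Finset.sum_eq_sum_iff_of_le hle).1 hsum i hi)

/-- With `T = Σ_i w_i (C_i ∘ R_i)` built from compositions `R_i` of relaxed
projections (parameters in `(0,2)`) along lists `L_i` and operators `C_i` fixing
`{a_u : u ∈ G_i}ᗮ`, leaving `H_i = span{a_u : u ∈ G_i}` invariant and `α_i`-contractive on it,
where the lists and sets together cover all indices: if `‖T x‖ = ‖x‖` then `⟨x, a_j⟩ = 0` for
every `j`. -/
theorem stmt_8 {d m c : ℕ} (a : Fin m → EuclideanSpace ℂ (Fin d)) (ha : ∀ j, a j ≠ 0)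
    (w : Fin c → ℝ) (hw : ∀ i, 0 < w i) (hw1 : ∑ i, w i = 1)
    (L : Fin c → List (Fin m)) (ω : Fin m → ℝ)
    (hω : ∀ i, ∀ v ∈ L i, ω v ∈ Set.Ioo (0 : ℝ) 2)
    (R : Fin c → EuclideanSpace ℂ (Fin d) → EuclideanSpace ℂ (Fin d))
    (hR : ∀ i x, R i x = (L i).foldl (fun y v => relaxProj (a v) (ω v) y) x)
    (G : Fin c → Set (Fin m)) (α : Fin c → ℝ) (hα : ∀ i, α i < 1)
    (C : Fin c → (EuclideanSpace ℂ (Fin d) →ₗ[ℂ] EuclideanSpace ℂ (Fin d)))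
    (hCfix : ∀ i x, (∀ u ∈ G i, (inner ℂ (a u) x : ℂ) = 0) → C i x = x)
    (hCinv : ∀ i, ∀ x ∈ Submodule.span ℂ (a '' G i), C i x ∈ Submodule.span ℂ (a '' G i))
    (hCcon : ∀ i, ∀ x ∈ Submodule.span ℂ (a '' G i), ‖C i x‖ ≤ α i * ‖x‖)
    (hcover : ∀ j : Fin m, (∃ i, j ∈ L i) ∨ (∃ i, j ∈ G i))
    (T : EuclideanSpace ℂ (Fin d) → EuclideanSpace ℂ (Fin d))
    (hT : ∀ x, T x = ∑ i, w i • C i (R i x))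
    (x : EuclideanSpace ℂ (Fin d)) (hx : ‖T x‖ = ‖x‖) :
    ∀ j, (inner ℂ (a j) x : ℂ) = 0 := by
  have hspan : ∀ i, ∀ u ∈ G i, a u ∈ Submodule.span ℂ (a '' G i) :=
    fun i u hu => Submodule.subset_span ⟨u, hu, rfl⟩
  have hCfix_orth : ∀ i, ∀ y ∈ (Submodule.span ℂ (a '' G i))ᗮ, C i y = y := fun i y hy =>
    hCfix i y fun u hu => Submodule.inner_right_of_mem_orthogonal (hspan i u hu) hy
  have hC_le : ∀ i y, ‖C i y‖ ≤ ‖y‖ :=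
    fun i => norm_apply_le_of_contractive (hCfix_orth i) (hCinv i) (hCcon i) (hα i).le
  have hR_le : ∀ i, ‖R i x‖ ≤ ‖x‖ := fun i => (hR i x).symm ▸
    norm_foldl_relaxProj_le a (fun v hv => Set.Ioo_subset_Icc_self (hω i v hv)) x
  have hCR : ∀ i, ‖C i (R i x)‖ = ‖x‖ := fun i =>
    norm_eq_of_le_norm_sum_smul (fun i _ => hw i) hw1 (fun i _ => (hC_le i _).trans (hR_le i))
      (by rw [← hT, hx]) i (Finset.mem_univ i)
  have hblock : ∀ i, (∀ v ∈ L i, inner ℂ (a v) x = 0) ∧ ∀ u ∈ G i, inner ℂ (a u) x = 0 := by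
    intro i
    have hRx : ‖R i x‖ = ‖x‖ := le_antisymm (hR_le i) (hCR i ▸ hC_le i _)
    rw [hR] at hRx
    obtain ⟨hL, hfix⟩ := foldl_relaxProj_eq_self_of_norm_eq a (fun v _ => ha v) (hω i) hRx
    have hCx : ‖C i x‖ = ‖x‖ := by rw [← hCR i, hR, hfix]
    have hxK := mem_orthogonal_of_norm_apply_eq (hCfix_orth i) (hCinv i) (hCcon i) (hα i) hCx
    exact ⟨hL, fun u hu => Submodule.inner_right_of_mem_orthogonal (hspan i u hu) hxK⟩
  intro j
  rcases hcover j with ⟨i, hj⟩ | ⟨i, hj⟩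
  exacts [(hblock i).1 j hj, (hblock i).2 j hj]
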